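/- Let f and g be probability density functions on ℝ^d with ∫ |x|² (f(x)+g(x)) dx < ∞, and let μ(dx) = f(x)dx, ν(dx) = g(x)dx. Then there exists a constant C (depending only on d) such that W₂(μ,ν)² ≤ C ∫_{ℝ^d} |x|² |f(x) − g(x)| dx. -/

import Mathlib

/-!
Split `f = min f g + (f - g)⁺` and `g = min f g + (g - f)⁺`; the two residuals have the same mass.
Keep the common part `min f g` on the diagonal, where the cost vanishes, and couple the residuals
independently. Off the diagonal `‖x - y‖² ≤ 2‖x‖² + 2‖y‖²`, so the cost is at most
`2 ∫ ‖x‖² ((f - g)⁺ + (g - f)⁺) = 2 ∫ ‖x‖² |f - g|`; thus `C = 2` works in every dimension.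
-/

open MeasureTheory

/-- The squared 2-Wasserstein distance between two measures on a normed space,
defined as the infimum of `∫ |x−y|² dγ` over all couplings `γ`. -/
noncomputable def W2sq {E : Type*} [MeasurableSpace E] [NormedAddCommGroup E]
    (μ ν : Measure E) : ℝ :=
  sInf {r : ℝ | ∃ γ : Measure (E × E), IsProbabilityMeasure γ ∧
    γ.map Prod.fst = μ ∧ γ.map Prod.snd = ν ∧ r = ∫ p, ‖p.1 - p.2‖ ^ 2 ∂γ}

open Measure Set ENNReal

section Coupling

variable {α : Type*} [MeasurableSpace α]

/-- When `μ₁ = 0` the factor `(μ₁ univ)⁻¹` is `∞`, but it multiplies the zero measure. -/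
noncomputable def overlapCoupling (μ₀ μ₁ ν₁ : Measure α) : Measure (α × α) :=
  μ₀.map (fun x => (x, x)) + (μ₁ univ)⁻¹ • μ₁.prod ν₁

variable {μ₀ μ₁ ν₁ : Measure α} [IsFiniteMeasure μ₁] [IsFiniteMeasure ν₁]

lemma map_fst_smul_prod_of_measure_univ_eq (h : μ₁ univ = ν₁ univ) :
    ((μ₁ univ)⁻¹ • μ₁.prod ν₁).map Prod.fst = μ₁ := by
  rw [Measure.map_smul, map_fst_prod, smul_smul, ← h]
  rcases eq_or_ne μ₁ 0 with rfl | hμ₁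
  · simp
  · rw [ENNReal.inv_mul_cancel (by simpa using hμ₁) (measure_ne_top _ _), one_smul]

lemma map_snd_smul_prod_of_measure_univ_eq (h : μ₁ univ = ν₁ univ) :
    ((μ₁ univ)⁻¹ • μ₁.prod ν₁).map Prod.snd = ν₁ := by
  rw [Measure.map_smul, map_snd_prod, smul_smul]
  rcases eq_or_ne μ₁ 0 with rfl | hμ₁
  · simp [measure_univ_eq_zero.mp (by simpa using h.symm : ν₁ univ = 0)]
  · rw [ENNReal.inv_mul_cancel (by simpa using hμ₁) (measure_ne_top _ _), one_smul]

lemma map_fst_overlapCoupling (h : μ₁ univ = ν₁ univ) :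
    (overlapCoupling μ₀ μ₁ ν₁).map Prod.fst = μ₀ + μ₁ := by
  rw [overlapCoupling, Measure.map_add _ _ measurable_fst, map_fst_smul_prod_of_measure_univ_eq h,
    Measure.map_map measurable_fst (by fun_prop)]
  exact congrArg (· + μ₁) Measure.map_id

lemma map_snd_overlapCoupling (h : μ₁ univ = ν₁ univ) :
    (overlapCoupling μ₀ μ₁ ν₁).map Prod.snd = μ₀ + ν₁ := by
  rw [overlapCoupling, Measure.map_add _ _ measurable_snd, map_snd_smul_prod_of_measure_univ_eq h,
    Measure.map_map measurable_snd (by fun_prop)]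
  exact congrArg (· + ν₁) Measure.map_id

lemma lintegral_overlapCoupling_le (h : μ₁ univ = ν₁ univ) {c : α × α → ℝ≥0∞}
    {a b : α → ℝ≥0∞} (ha : Measurable a) (hb : Measurable b) (hc_diag : ∀ x, c (x, x) = 0)
    (hc : ∀ x y, c (x, y) ≤ a x + b y) :
    ∫⁻ p, c p ∂overlapCoupling μ₀ μ₁ ν₁ ≤ ∫⁻ x, a x ∂μ₁ + ∫⁻ y, b y ∂ν₁ := by
  set P := (μ₁ univ)⁻¹ • μ₁.prod ν₁
  calc ∫⁻ p, c p ∂overlapCoupling μ₀ μ₁ ν₁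
      = ∫⁻ p, c p ∂μ₀.map (fun x => (x, x)) + ∫⁻ p, c p ∂P := lintegral_add_measure _ _ _
    _ ≤ ∫⁻ x, c (x, x) ∂μ₀ + ∫⁻ p, (a p.1 + b p.2) ∂P :=
        add_le_add (lintegral_map_le _ _) (lintegral_mono fun p => hc p.1 p.2)
    _ = ∫⁻ p, a p.1 ∂P + ∫⁻ p, b p.2 ∂P := by
        simp only [hc_diag, lintegral_zero, zero_add]
        exact lintegral_add_left (ha.comp measurable_fst) _
    _ = ∫⁻ x, a x ∂μ₁ + ∫⁻ y, b y ∂ν₁ := by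
        rw [← lintegral_map ha measurable_fst, map_fst_smul_prod_of_measure_univ_eq h,
          ← lintegral_map hb measurable_snd, map_snd_smul_prod_of_measure_univ_eq h]

end Coupling

section Density

variable {α : Type*} [MeasurableSpace α] {ρ : Measure α}

lemma withDensity_add_withDensity_tsub {F H : α → ℝ≥0∞} (hH : Measurable H) (hle : H ≤ F) :
    ρ.withDensity H + ρ.withDensity (F - H) = ρ.withDensity F := by
  rw [← withDensity_add_left hH, add_tsub_cancel_of_le hle]

lemma isProbabilityMeasure_withDensity_ofReal {f : α → ℝ} (hf0 : 0 ≤ᵐ[ρ] f)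
    (hf1 : ∫ x, f x ∂ρ = 1) : IsProbabilityMeasure (ρ.withDensity fun x => ENNReal.ofReal (f x)) := by
  constructor
  rw [withDensity_apply _ MeasurableSet.univ, setLIntegral_univ,
    ← ofReal_integral_eq_lintegral_ofReal (Integrable.of_integral_ne_zero (by simp [hf1])) hf0,
    hf1, ENNReal.ofReal_one]

lemma ENNReal.ofReal_tsub_min_add_ofReal_tsub_min_le (a b : ℝ) :
    (ENNReal.ofReal a - min (ENNReal.ofReal a) (ENNReal.ofReal b))
      + (ENNReal.ofReal b - min (ENNReal.ofReal a) (ENNReal.ofReal b)) ≤ ENNReal.ofReal |a - b| := by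
  wlog hab : a ≤ b generalizing a b
  · simpa only [min_comm, add_comm, abs_sub_comm] using this b a (le_of_not_ge hab)
  rw [min_eq_left (ENNReal.ofReal_le_ofReal hab), tsub_self, zero_add, abs_sub_comm,
    abs_of_nonneg (sub_nonneg.2 hab), tsub_le_iff_right]
  calc ENNReal.ofReal b = ENNReal.ofReal (b - a + a) := by rw [sub_add_cancel]
    _ ≤ ENNReal.ofReal (b - a) + ENNReal.ofReal a := ENNReal.ofReal_add_le

end Density

section Wasserstein

variable {E : Type*} [NormedAddCommGroup E]

lemma ofReal_norm_sub_sq_le (x y : E) :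
    ENNReal.ofReal (‖x - y‖ ^ 2) ≤ ENNReal.ofReal (2 * ‖x‖ ^ 2) + ENNReal.ofReal (2 * ‖y‖ ^ 2) := by
  rw [← ENNReal.ofReal_add (by positivity) (by positivity)]
  refine ENNReal.ofReal_le_ofReal ?_
  calc ‖x - y‖ ^ 2 ≤ (‖x‖ + ‖y‖) ^ 2 := by gcongr; exact norm_sub_le x y
    _ ≤ 2 * (‖x‖ ^ 2 + ‖y‖ ^ 2) := add_sq_le
    _ = 2 * ‖x‖ ^ 2 + 2 * ‖y‖ ^ 2 := mul_add _ _ _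

variable [MeasurableSpace E]

lemma W2sq_le_integral {μ ν : Measure E} {γ : Measure (E × E)} [IsProbabilityMeasure γ]
    (hfst : γ.map Prod.fst = μ) (hsnd : γ.map Prod.snd = ν) :
    W2sq μ ν ≤ ∫ p, ‖p.1 - p.2‖ ^ 2 ∂γ :=
  csInf_le ⟨0, by rintro _ ⟨γ', -, -, -, rfl⟩; positivity⟩ ⟨γ, ‹_›, hfst, hsnd, rfl⟩

variable [BorelSpace E] [SecondCountableTopology E]

theorem W2sq_le_of_eq_add {μ ν μ₀ μ₁ ν₁ : Measure E} [IsProbabilityMeasure μ]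
    [IsProbabilityMeasure ν] (hμ : μ = μ₀ + μ₁) (hν : ν = μ₀ + ν₁) {r : ℝ} (hr : 0 ≤ r)
    (hmoment : ∫⁻ x, ENNReal.ofReal (2 * ‖x‖ ^ 2) ∂μ₁ + ∫⁻ y, ENNReal.ofReal (2 * ‖y‖ ^ 2) ∂ν₁
      ≤ ENNReal.ofReal r) :
    W2sq μ ν ≤ r := by
  have : IsFiniteMeasure μ₀ := isFiniteMeasure_of_le μ (hμ ▸ Measure.le_add_right le_rfl)
  have : IsFiniteMeasure μ₁ := isFiniteMeasure_of_le μ (hμ ▸ Measure.le_add_left le_rfl)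
  have : IsFiniteMeasure ν₁ := isFiniteMeasure_of_le ν (hν ▸ Measure.le_add_left le_rfl)
  have hmass : μ₁ univ = ν₁ univ := by
    have h := (measure_univ : μ univ = 1).trans (measure_univ : ν univ = 1).symm
    rwa [hμ, hν, Measure.add_apply, Measure.add_apply,
      ENNReal.add_right_inj (measure_ne_top _ _)] at h
  set γ := overlapCoupling μ₀ μ₁ ν₁
  have hfst : γ.map Prod.fst = μ := (map_fst_overlapCoupling hmass).trans hμ.symm
  have hsnd : γ.map Prod.snd = ν := (map_snd_overlapCoupling hmass).trans hν.symm
  have : IsProbabilityMeasure γ := by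
    constructor
    rw [← measure_univ (μ := μ), ← hfst, Measure.map_apply measurable_fst MeasurableSet.univ,
      preimage_univ]
  have hcost : ∫⁻ p, ENNReal.ofReal (‖p.1 - p.2‖ ^ 2) ∂γ ≤ ENNReal.ofReal r :=
    (lintegral_overlapCoupling_le hmass (by fun_prop) (by fun_prop) (by simp)
      ofReal_norm_sub_sq_le).trans hmoment
  calc W2sq μ ν ≤ ∫ p, ‖p.1 - p.2‖ ^ 2 ∂γ := W2sq_le_integral hfst hsnd
    _ = (∫⁻ p, ENNReal.ofReal (‖p.1 - p.2‖ ^ 2) ∂γ).toReal :=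
        integral_eq_lintegral_of_nonneg_ae (ae_of_all _ fun _ => by positivity) (by fun_prop)
    _ ≤ r := ENNReal.toReal_le_of_le_ofReal hr hcost

theorem W2sq_withDensity_le (ρ : Measure E) {f g : E → ℝ} (hf : Measurable f) (hg : Measurable g)
    (hf0 : 0 ≤ᵐ[ρ] f) (hg0 : 0 ≤ᵐ[ρ] g) (hf1 : ∫ x, f x ∂ρ = 1) (hg1 : ∫ x, g x ∂ρ = 1)
    (hmoment : Integrable (fun x => ‖x‖ ^ 2 * (f x + g x)) ρ) :
    W2sq (ρ.withDensity fun x => ENNReal.ofReal (f x)) (ρ.withDensity fun x => ENNReal.ofReal (g x))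
      ≤ 2 * ∫ x, ‖x‖ ^ 2 * |f x - g x| ∂ρ := by
  set F : E → ℝ≥0∞ := fun x => ENNReal.ofReal (f x)
  set G : E → ℝ≥0∞ := fun x => ENNReal.ofReal (g x)
  have hF : Measurable F := hf.ennreal_ofReal
  have hG : Measurable G := hg.ennreal_ofReal
  have hH : Measurable (F ⊓ G) := hF.inf hG
  have := isProbabilityMeasure_withDensity_ofReal hf0 hf1
  have := isProbabilityMeasure_withDensity_ofReal hg0 hg1
  have hint : Integrable (fun x => 2 * (‖x‖ ^ 2 * |f x - g x|)) ρ := by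
    refine (hmoment.mono' (by fun_prop) ?_).const_mul 2
    filter_upwards [hf0, hg0] with x (hfx : 0 ≤ f x) (hgx : 0 ≤ g x)
    rw [Real.norm_of_nonneg (by positivity)]
    gcongr
    exact abs_sub_le_iff.2 ⟨by linarith, by linarith⟩
  refine W2sq_le_of_eq_add (withDensity_add_withDensity_tsub hH inf_le_left).symm
    (withDensity_add_withDensity_tsub hH inf_le_right).symm (by positivity) ?_
  calc ∫⁻ x, ENNReal.ofReal (2 * ‖x‖ ^ 2) ∂ρ.withDensity (F - F ⊓ G)
        + ∫⁻ x, ENNReal.ofReal (2 * ‖x‖ ^ 2) ∂ρ.withDensity (G - F ⊓ G)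
      = ∫⁻ x, ((F - F ⊓ G) x + (G - F ⊓ G) x) * ENNReal.ofReal (2 * ‖x‖ ^ 2) ∂ρ := by
        rw [← lintegral_add_measure, ← withDensity_add_left (hF.sub hH),
          lintegral_withDensity_eq_lintegral_mul _ ((hF.sub hH).add (hG.sub hH)) (by fun_prop)]
        rfl
    _ ≤ ∫⁻ x, ENNReal.ofReal (2 * (‖x‖ ^ 2 * |f x - g x|)) ∂ρ := by
        refine lintegral_mono fun x => ?_
        rw [← mul_assoc, ENNReal.ofReal_mul' (abs_nonneg _), mul_comm]
        gcongr
        exact ENNReal.ofReal_tsub_min_add_ofReal_tsub_min_le _ _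
    _ = ENNReal.ofReal (2 * ∫ x, ‖x‖ ^ 2 * |f x - g x| ∂ρ) := by
        rw [← integral_const_mul, ofReal_integral_eq_lintegral_ofReal hint
          (ae_of_all _ fun _ => by positivity)]

end Wasserstein

/-- Density coupling lemma (Lemma 3.3, Horowitz–Karandikar): there is a constant `C`
depending only on the dimension such that for all probability densities `f, g` on `ℝ^d`
with finite second moments, `W₂(f dx, g dx)² ≤ C ∫ |x|² |f(x) − g(x)| dx`. -/
theorem stmt_4 (d : ℕ) :
    ∃ C : ℝ, ∀ f g : EuclideanSpace ℝ (Fin d) → ℝ,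
      Measurable f → Measurable g → (∀ x, 0 ≤ f x) → (∀ x, 0 ≤ g x) →
      (∫ x, f x) = 1 → (∫ x, g x) = 1 →
      Integrable (fun x => ‖x‖ ^ 2 * (f x + g x)) →
      W2sq (volume.withDensity (fun x => ENNReal.ofReal (f x)))
          (volume.withDensity (fun x => ENNReal.ofReal (g x)))
        ≤ C * ∫ x, ‖x‖ ^ 2 * |f x - g x| :=
  ⟨2, fun _ _ hf hg hf0 hg0 hf1 hg1 hmoment =>
    W2sq_withDensity_le volume hf hg (ae_of_all _ hf0) (ae_of_all _ hg0) hf1 hg1 hmoment⟩
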